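/- The fault-tolerant metric dimension β'(G) of a connected graph G is at least the number of twin vertices of G. -/
import Mathlib


open SimpleGraph

variable {V : Type*}

/-- `S` is a resolving set of `G`. -/
def ResSet (G : SimpleGraph V) (S : Set V) : Prop :=
  ∀ x y : V, x ≠ y → ∃ w ∈ S, G.dist x w ≠ G.dist y w

/-- `S` is a fault-tolerant resolving set of `G`. -/
def FTResSet (G : SimpleGraph V) (S : Set V) : Prop :=
  ResSet G S ∧ ∀ x ∈ S, ResSet G (S \ {x})

/-- Metric dimension. -/
noncomputable def md (G : SimpleGraph V) : ℕ :=
  sInf {n | ∃ S : Set V, S.ncard = n ∧ ResSet G S}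

/-- Fault-tolerant metric dimension. -/
noncomputable def ftmd (G : SimpleGraph V) : ℕ :=
  sInf {n | ∃ S : Set V, S.ncard = n ∧ FTResSet G S}

/-- `u` and `v` are twins: distinct and with equal open or equal closed neighborhoods. -/
def IsTwinPair (G : SimpleGraph V) (u v : V) : Prop :=
  u ≠ v ∧ (G.neighborSet u = G.neighborSet v ∨
    G.neighborSet u ∪ {u} = G.neighborSet v ∪ {v})

/-- `u` is a twin vertex. -/
def IsTwin (G : SimpleGraph V) (u : V) : Prop := ∃ v, IsTwinPair G u v

lemma IsTwinPair.symm {G : SimpleGraph V} {u v : V} (h : IsTwinPair G u v) :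
    IsTwinPair G v u :=
  ⟨h.1.symm, h.2.imp Eq.symm Eq.symm⟩

lemma twin_adj {G : SimpleGraph V} {u v x : V} (h : IsTwinPair G u v)
    (hx : G.Adj u x) (hxv : x ≠ v) : G.Adj v x := by
  rcases h.2 with h2 | h2
  · have : x ∈ G.neighborSet v := h2 ▸ hx
    exact this
  · have : x ∈ G.neighborSet v ∪ {v} := h2 ▸ (Set.mem_union_left _ hx)
    rcases this with h3 | h3
    · exact h3
    · exact absurd h3 hxv

lemma twin_dist_le {G : SimpleGraph V} (hG : G.Connected) {u v w : V}
    (h : IsTwinPair G u v) (hwu : w ≠ u) : G.dist v w ≤ G.dist u w := by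
  obtain ⟨p, hp⟩ := hG.exists_walk_length_eq_dist u w
  cases p with
  | nil => exact absurd rfl hwu.symm
  | cons hadj q =>
    rename_i x
    by_cases hxv : x = v
    · subst hxv
      have := SimpleGraph.dist_le q
      simp [SimpleGraph.Walk.length_cons] at hp
      omega
    · have hv : G.Adj v x := twin_adj h hadj hxv
      have := SimpleGraph.dist_le (SimpleGraph.Walk.cons hv q)
      simp [SimpleGraph.Walk.length_cons] at this hp
      omega

lemma twin_dist {G : SimpleGraph V} (hG : G.Connected) {u v w : V}
    (h : IsTwinPair G u v) (hwu : w ≠ u) (hwv : w ≠ v) : G.dist u w = G.dist v w :=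
  le_antisymm (twin_dist_le hG h.symm hwv) (twin_dist_le hG h hwu)

lemma twin_mem_of_FT {G : SimpleGraph V} (hG : G.Connected) {S : Set V}
    (hS : FTResSet G S) {u : V} (hu : IsTwin G u) : u ∈ S := by
  obtain ⟨v, hv⟩ := hu
  by_contra huS
  -- v ∈ S
  obtain ⟨w, hwS, hw⟩ := hS.1 u v hv.1
  have hwv : w = v := by
    by_contra hwv
    have hwu : w ≠ u := fun h => huS (h ▸ hwS)
    exact hw (twin_dist hG hv hwu hwv)
  subst hwv
  obtain ⟨w', hw'S, hw'⟩ := hS.2 w hwS u w hv.1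
  have hwu : w' ≠ u := fun h => huS (h ▸ hw'S.1)
  exact hw' (twin_dist hG hv hwu hw'S.2)

theorem ftmd_ge_card_twins [Fintype V] (G : SimpleGraph V) (hG : G.Connected) :
    {u : V | IsTwin G u}.ncard ≤ ftmd G := by
  classical
  have huniv : FTResSet G Set.univ := by
    constructor
    · intro x y hxy
      refine ⟨x, Set.mem_univ x, ?_⟩
      rw [SimpleGraph.dist_self]
      exact (hG.pos_dist_of_ne hxy.symm).ne
    · intro z _ x y hxy
      by_cases hxz : x = z
      · refine ⟨y, ⟨Set.mem_univ y, fun h => hxy (hxz.trans h.symm)⟩, ?_⟩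
        rw [SimpleGraph.dist_self]
        exact (hG.pos_dist_of_ne hxy).ne'
      · refine ⟨x, ⟨Set.mem_univ x, hxz⟩, ?_⟩
        rw [SimpleGraph.dist_self]
        exact (hG.pos_dist_of_ne hxy.symm).ne
  refine le_csInf ⟨Set.univ.ncard, ⟨Set.univ, rfl, huniv⟩⟩ ?_
  rintro n ⟨S, rfl, hS⟩
  exact Set.ncard_le_ncard (fun u hu => twin_mem_of_FT hG hS hu) S.toFinite
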